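/- Let α, β ∈ ℝ, a := e^{iα}/√2, b := e^{iβ}/√2, p := (0, a, b, 0), q := (0, a, −b, 0) ∈ ℂ⁴, and ρ := (1/2)·pp* + (1/2)·qq*. Let e₁, e₂, e₃, e₄ be the canonical basis of ℂ⁴. Then the nonselective Lüders operation of each of the two coincidence measurements given by the orthonormal bases {e₁, e₂, e₃, e₄} and {p, e₁, e₄, q} leaves ρ invariant: Σ_{k=1}^{4} (e_k e_k*) ρ (e_k e_k*) = ρ and (pp*)ρ(pp*) + (e₁e₁*)ρ(e₁e₁*) + (e₄e₄*)ρ(e₄e₄*) + (qq*)ρ(qq*) = ρ. Consequently the marginal distribution law is satisfied by all four measurements of the nonlocal box model. -/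

import Mathlib

open scoped InnerProductSpace
open Matrix

noncomputable section

/-- `ℂ²` as a Hilbert space. -/
abbrev C2 : Type := EuclideanSpace ℂ (Fin 2)

/-- `ℂ⁴` as a Hilbert space. -/
abbrev C4 : Type := EuclideanSpace ℂ (Fin 4)

/-- Kronecker product of vectors: `(x ⊗ y)_(2i+j) = xᵢ · yⱼ`. -/
def vKron (x y : C2) : C4 :=
  (WithLp.equiv 2 (Fin 4 → ℂ)).symm fun k =>
    x (⟨k.val / 2, by omega⟩ : Fin 2) * y (⟨k.val % 2, by omega⟩ : Fin 2)

/-- Kronecker product of 2×2 matrices as a 4×4 matrix. -/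
def mKron (M N : Matrix (Fin 2) (Fin 2) ℂ) : Matrix (Fin 4) (Fin 4) ℂ :=
  Matrix.of fun i j =>
    M (⟨i.val / 2, by omega⟩ : Fin 2) (⟨j.val / 2, by omega⟩ : Fin 2) *
      N (⟨i.val % 2, by omega⟩ : Fin 2) (⟨j.val % 2, by omega⟩ : Fin 2)

/-- The rank-one matrix `u · uᴴ` (`uu*`). -/
def rankOne {n : ℕ} (u : EuclideanSpace ℂ (Fin n)) : Matrix (Fin n) (Fin n) ℂ :=
  Matrix.of fun i j => u i * star (u j)

/-- The vector `(a, b, c, d) ∈ ℂ⁴`. -/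
def vec4 (a b c d : ℂ) : C4 :=
  (WithLp.equiv 2 (Fin 4 → ℂ)).symm ![a, b, c, d]

/-!
Because `(uu*)(vv*)(uu*) = |⟪u, v⟫|² uu*`, the Lüders operation of an orthonormal basis fixes
every matrix of the form `Σₖ cₖ uₖuₖ*` in that basis. The state `ρ` is of this form in both bases:
the cross terms of `pp*` and `qq*` cancel, so `ρ = |a|² e₂e₂* + |b|² e₃e₃*`, and `{p, e₁, e₄, q}`
is orthonormal because `|a|² = |b|² = ½`.
-/

open ComplexConjugate

lemma rankOne_eq_vecMulVec {n : ℕ} (u : EuclideanSpace ℂ (Fin n)) :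
    rankOne u = vecMulVec u (star u) := rfl

lemma rankOne_mul_rankOne_mul_rankOne {n : ℕ} (u v : EuclideanSpace ℂ (Fin n)) :
    rankOne u * rankOne v * rankOne u = (⟪u, v⟫_ℂ * ⟪v, u⟫_ℂ) • rankOne u := by
  simp only [rankOne_eq_vecMulVec, vecMulVec_mul_vecMulVec, Matrix.smul_mul, vecMulVec_smul,
    smul_smul, EuclideanSpace.inner_eq_star_dotProduct]
  rw [dotProduct_comm v.ofLp, dotProduct_comm u.ofLp, mul_comm]

theorem sum_rankOne_mul_mul_rankOne_of_orthonormal {ι : Type*} [Fintype ι] {n : ℕ}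
    {u : ι → EuclideanSpace ℂ (Fin n)} (hu : Orthonormal ℂ u) (c : ι → ℂ) :
    ∑ j, rankOne (u j) * (∑ k, c k • rankOne (u k)) * rankOne (u j) =
      ∑ k, c k • rankOne (u k) := by
  classical
  have hcompress (j : ι) :
      rankOne (u j) * (∑ k, c k • rankOne (u k)) * rankOne (u j) = c j • rankOne (u j) := by
    simp only [Matrix.mul_sum, Matrix.sum_mul, Matrix.mul_smul, Matrix.smul_mul,
      rankOne_mul_rankOne_mul_rankOne, orthonormal_iff_ite.mp hu, smul_smul]
    simp [eq_comm]
  simp only [hcompress]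

lemma inner_vec4 (a b c d a' b' c' d' : ℂ) :
    ⟪vec4 a b c d, vec4 a' b' c' d'⟫_ℂ =
      conj a * a' + conj b * b' + conj c * c' + conj d * d' := by
  simp only [vec4, WithLp.equiv_symm_apply, EuclideanSpace.inner_eq_star_dotProduct, dotProduct,
    Pi.star_apply, RCLike.star_def, Fin.sum_univ_four, Fin.isValue, cons_val_zero, cons_val_one,
    cons_val]
  ring

lemma orthonormal_vec4_standard :
    Orthonormal ℂ ![vec4 1 0 0 0, vec4 0 1 0 0, vec4 0 0 1 0, vec4 0 0 0 1] := by
  rw [orthonormal_iff_ite]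
  intro i j
  fin_cases i <;> fin_cases j <;> simp [-inner_self_eq_norm_sq_to_K, inner_vec4]

lemma orthonormal_vec4_bell {a b : ℂ} (ha : conj a * a = 1 / 2) (hb : conj b * b = 1 / 2) :
    Orthonormal ℂ ![vec4 0 a b 0, vec4 1 0 0 0, vec4 0 0 0 1, vec4 0 a (-b) 0] := by
  rw [orthonormal_iff_ite]
  intro i j
  fin_cases i <;> fin_cases j <;> simp [-inner_self_eq_norm_sq_to_K, inner_vec4, ha, hb] <;>
    norm_num

lemma half_smul_rankOne_add_half_smul_rankOne_vec4 (a b : ℂ) :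
    (1 / 2 : ℂ) • rankOne (vec4 0 a b 0) + (1 / 2 : ℂ) • rankOne (vec4 0 a (-b) 0) =
      (a * conj a) • rankOne (vec4 0 1 0 0) + (b * conj b) • rankOne (vec4 0 0 1 0) := by
  ext i j
  fin_cases i <;> fin_cases j <;> simp [rankOne, vec4] <;> ring

lemma conj_mul_self_eq_half {γ : ℝ} {a : ℂ}
    (ha : a = Complex.exp (γ * Complex.I) / Real.sqrt 2) : conj a * a = 1 / 2 := by
  rw [← Complex.normSq_eq_conj_mul_self, ha, map_div₀, Complex.normSq_ofReal,
    Complex.normSq_eq_norm_sq, Complex.norm_exp_ofReal_mul_I,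
    Real.mul_self_sqrt zero_le_two]
  norm_num

/-- In the nonlocal box model with `ρ = ½pp* + ½qq*`, `p = (0,a,b,0)`, `q = (0,a,−b,0)`,
`a = e^{iα}/√2`, `b = e^{iβ}/√2`, the nonselective Lüders operation of each of the two
coincidence measurements given by the orthonormal bases `{e₁,e₂,e₃,e₄}` and `{p,e₁,e₄,q}`
leaves `ρ` invariant: `Σₖ (eₖeₖ*)ρ(eₖeₖ*) = ρ` and
`(pp*)ρ(pp*) + (e₁e₁*)ρ(e₁e₁*) + (e₄e₄*)ρ(e₄e₄*) + (qq*)ρ(qq*) = ρ`; hence the marginal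
distribution law is satisfied by all four measurements of the nonlocal box model. -/
theorem stmt_14 (α β : ℝ) (a b : ℂ)
    (ha : a = Complex.exp (α * Complex.I) / Real.sqrt 2)
    (hb : b = Complex.exp (β * Complex.I) / Real.sqrt 2)
    (p q e1 e2 e3 e4 : C4)
    (hp : p = vec4 0 a b 0) (hq : q = vec4 0 a (-b) 0)
    (he1 : e1 = vec4 1 0 0 0) (he2 : e2 = vec4 0 1 0 0)
    (he3 : e3 = vec4 0 0 1 0) (he4 : e4 = vec4 0 0 0 1)
    (ρ : Matrix (Fin 4) (Fin 4) ℂ)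
    (hρ : ρ = (1 / 2 : ℂ) • rankOne p + (1 / 2 : ℂ) • rankOne q) :
    (rankOne e1 * ρ * rankOne e1 + rankOne e2 * ρ * rankOne e2 +
        rankOne e3 * ρ * rankOne e3 + rankOne e4 * ρ * rankOne e4 = ρ) ∧
      (rankOne p * ρ * rankOne p + rankOne e1 * ρ * rankOne e1 +
        rankOne e4 * ρ * rankOne e4 + rankOne q * ρ * rankOne q = ρ) := by
  subst hρ hp hq he1 he2 he3 he4
  constructor
  · have h := sum_rankOne_mul_mul_rankOne_of_orthonormal orthonormal_vec4_standard
      ![0, a * conj a, b * conj b, 0]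
    rw [half_smul_rankOne_add_half_smul_rankOne_vec4]
    simpa [Fin.sum_univ_four, add_assoc] using h
  · have h := sum_rankOne_mul_mul_rankOne_of_orthonormal
      (orthonormal_vec4_bell (conj_mul_self_eq_half ha) (conj_mul_self_eq_half hb))
      ![1 / 2, 0, 0, 1 / 2]
    simpa [Fin.sum_univ_four] using h
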